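/- arXiv:1506.03620 — 2 statements merged into one kernel-verified Lean document; each statement's English description precedes it below -/
import Mathlib

section
/- For every dimension d ≥ 1 and every natural number s ≥ 1, the combined ℓ¹–ℓ² constraint set is contained in twice the convex hull of the s-sparse unit-ball vectors: {z ∈ ℝ^d : ‖z‖₁ ≤ √s, ‖z‖₂ ≤ 1} ⊆ 2 · conv(S_{d,s}), where S_{d,s} := {z ∈ ℝ^d : ‖z‖₀ ≤ s, ‖z‖₂ ≤ 1} and 2 · conv(S_{d,s}) = {2w : w ∈ conv(S_{d,s})}. -/
open Pointwise

/-- The ℓ¹-norm of a vector `z ∈ ℝ^d`: `‖z‖₁ = ∑ⱼ |zⱼ|`. -/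
noncomputable def l1Norm {d : ℕ} (z : Fin d → ℝ) : ℝ := ∑ j, |z j|

/-- The ℓ²-norm of a vector `z ∈ ℝ^d`: `‖z‖₂ = (∑ⱼ |zⱼ|²)^{1/2}`. -/
noncomputable def l2Norm {d : ℕ} (z : Fin d → ℝ) : ℝ := Real.sqrt (∑ j, (z j) ^ 2)

/-- The "ℓ⁰-norm" of a vector `z ∈ ℝ^d`: the number of non-zero entries of `z`. -/
noncomputable def l0Norm {d : ℕ} (z : Fin d → ℝ) : ℕ := Set.ncard {j | z j ≠ 0}

/-- `S_{d,s}`: the set of `s`-sparse vectors in the Euclidean unit ball. -/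
def sparseBall (d s : ℕ) : Set (Fin d → ℝ) :=
  {z | l0Norm z ≤ s ∧ l2Norm z ≤ 1}

/-!
Put `t = 1/√s`. At most `s` coordinates of `z` exceed `t` in absolute value, since their absolute
values sum to at most `‖z‖₁ ≤ s t`; so they form a point of `S_{d,s}`. The remaining coordinates
form a point of the polytope `{v : |vⱼ| ≤ t, ‖v‖₁ ≤ s t}`, which is the convex hull of the
`s`-sparse vectors with entries in `[-t, t]`, and these have `‖·‖₂ ≤ √s t = 1`.
Hence `z ∈ conv S + conv S = 2 conv S`.

For the polytope, coordinate sign changes reduce to `v ≥ 0`. If two coordinates `vᵢ, vⱼ` lie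
strictly between `0` and `t`, moving mass from one to the other keeps the sum and the box;
pushing in either direction until one of them reaches `0` or `t` writes `v` as a convex
combination of two points with fewer such coordinates. With at most one such coordinate,
`∑ v ≤ s t` forces at most `s` nonzero entries.
-/

open Finset

theorem Convex.mem_of_add_smul_mem_of_sub_smul_mem {E : Type*} [AddCommGroup E] [Module ℝ E]
    {C : Set E} (hC : Convex ℝ C) {x y : E} {a b : ℝ} (ha : 0 < a) (hb : 0 < b)
    (h₁ : x + a • y ∈ C) (h₂ : x - b • y ∈ C) : x ∈ C := by
  convert hC h₁ h₂ (by positivity : 0 ≤ b / (a + b)) (by positivity : 0 ≤ a / (a + b))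
    (by field_simp; ring) using 1
  match_scalars <;> field_simp <;> ring

theorem abs_indicator_le_abs_self {α : Type*} (A : Set α) (f : α → ℝ) (a : α) :
    |A.indicator f a| ≤ |f a| := by
  simpa only [Real.norm_eq_abs] using norm_indicator_le_norm_self f a

section SparseBox

variable {ι : Type*} [Fintype ι]

def sparseBox (s : ℕ) (t : ℝ) : Set (ι → ℝ) :=
  {w | #(univ.filter fun j => w j ≠ 0) ≤ s ∧ ∀ j, |w j| ≤ t}

noncomputable def fractionalCoords (t : ℝ) (v : ι → ℝ) : Finset ι :=
  univ.filter fun j => v j ∈ Set.Ioo 0 t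

theorem sum_sub_lt_of_card_fractionalCoords_le_one {t : ℝ} (ht : 0 < t) {v : ι → ℝ}
    (hF : #(fractionalCoords t v) ≤ 1) : ∑ j ∈ fractionalCoords t v, (t - v j) < t := by
  obtain hF₀ | ⟨a, ha⟩ := (fractionalCoords t v).eq_empty_or_nonempty
  · simpa [hF₀] using ht
  · have hva := (mem_filter.1 ha).2.1
    rw [eq_singleton_iff_unique_mem.2 ⟨ha, fun b hb => card_le_one.1 hF b hb a ha⟩, sum_singleton]
    linarith

theorem card_support_le_of_card_fractionalCoords_le_one {s : ℕ} {t : ℝ} (ht : 0 < t)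
    {v : ι → ℝ} (hv : ∀ j, v j ∈ Set.Icc 0 t) (hsum : ∑ j, v j ≤ s * t)
    (hF : #(fractionalCoords t v) ≤ 1) : #(univ.filter fun j => v j ≠ 0) ≤ s := by
  set N := univ.filter fun j => v j ≠ 0
  have hFN : fractionalCoords t v ⊆ N :=
    monotone_filter_right _ fun _ _ hj => (Set.mem_Ioo.1 hj).1.ne'
  have hNF : ∀ j ∈ N, j ∉ fractionalCoords t v → t - v j = 0 := by
    intro j hjN hjF
    simp only [N, fractionalCoords, mem_filter, mem_univ, true_and, Set.mem_Ioo] at hjN hjF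
    grind [hv j]
  have : (#N : ℝ) * t < (s + 1) * t :=
    calc (#N : ℝ) * t = ∑ j ∈ N, v j + ∑ j ∈ N, (t - v j) := by
          rw [← sum_add_distrib]; simp
      _ = ∑ j, v j + ∑ j ∈ fractionalCoords t v, (t - v j) := by
          rw [sum_filter_ne_zero, sum_subset hFN hNF]
      _ < s * t + t :=
          add_lt_add_of_le_of_lt hsum (sum_sub_lt_of_card_fractionalCoords_le_one ht hF)
      _ = (s + 1) * t := by ring
  exact Nat.lt_succ_iff.1 (by exact_mod_cast lt_of_mul_lt_mul_right this ht.le)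

theorem exists_pos_card_fractionalCoords_add_smul_lt [DecidableEq ι] {t : ℝ} {v : ι → ℝ}
    (hv : ∀ k, v k ∈ Set.Icc 0 t) {i j : ι} (hij : i ≠ j) (hi : i ∈ fractionalCoords t v)
    (hj : j ∈ fractionalCoords t v) :
    ∃ e > (0 : ℝ),
      (∀ k, (v + e • (Pi.single i 1 - Pi.single j 1 : ι → ℝ)) k ∈ Set.Icc 0 t) ∧
      #(fractionalCoords t (v + e • (Pi.single i 1 - Pi.single j 1 : ι → ℝ))) <
        #(fractionalCoords t v) := by
  have hvi : v i ∈ Set.Ioo 0 t := (mem_filter.1 hi).2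
  have hvj : v j ∈ Set.Ioo 0 t := (mem_filter.1 hj).2
  have he : 0 < min (t - v i) (v j) := lt_min (by linarith [hvi.2]) hvj.1
  refine ⟨_, he, ?_⟩
  set e := min (t - v i) (v j) with he_def
  set w := v + e • (Pi.single i 1 - Pi.single j 1 : ι → ℝ)
  have hwi : w i = v i + e := by simp [w, hij]
  have hwj : w j = v j - e := by simp [w, hij.symm, sub_eq_add_neg]
  have hwk : ∀ k, k ≠ i → k ≠ j → w k = v k := fun k hki hkj => by simp [w, hki, hkj]
  have he_le_i : e ≤ t - v i := min_le_left _ _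
  have he_le_j : e ≤ v j := min_le_right _ _
  have hsub : fractionalCoords t w ⊆ fractionalCoords t v := by
    intro k hk
    rcases eq_or_ne k i with rfl | hki
    · exact hi
    rcases eq_or_ne k j with rfl | hkj
    · exact hj
    simpa [fractionalCoords, hwk k hki hkj] using hk
  refine ⟨fun k => ?_, card_lt_card ((ssubset_iff_of_subset hsub).2 ?_)⟩
  · rcases eq_or_ne k i with rfl | hki
    · rw [hwi]; constructor <;> linarith [hvi.1]
    rcases eq_or_ne k j with rfl | hkj
    · rw [hwj]; constructor <;> linarith [hvj.2]
    rw [hwk k hki hkj]; exact hv k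
  · rcases min_choice (t - v i) (v j) with h | h <;> rw [← he_def] at h
    · exact ⟨i, hi, by simp [fractionalCoords, hwi, h]⟩
    · exact ⟨j, hj, by simp [fractionalCoords, hwj, h]⟩

theorem sum_add_smul_single_sub_single [DecidableEq ι] (v : ι → ℝ) (e : ℝ) (i j : ι) :
    ∑ k, (v + e • (Pi.single i 1 - Pi.single j 1 : ι → ℝ)) k = ∑ k, v k := by
  simp [sum_add_distrib, sum_sub_distrib, ← mul_sum]

theorem mem_convexHull_sparseBox_of_mem_Icc {s : ℕ} {t : ℝ} (ht : 0 < t) {v : ι → ℝ}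
    (hv : ∀ j, v j ∈ Set.Icc 0 t) (hsum : ∑ j, v j ≤ s * t) :
    v ∈ convexHull ℝ (sparseBox s t) := by
  classical
  obtain ⟨n, hn⟩ : ∃ n, #(fractionalCoords t v) = n := ⟨_, rfl⟩
  induction n using Nat.strong_induction_on generalizing v with | _ n ih =>
  subst hn
  by_cases hF : #(fractionalCoords t v) ≤ 1
  · exact subset_convexHull ℝ _ ⟨card_support_le_of_card_fractionalCoords_le_one ht hv hsum hF,
      fun j => abs_le.2 ⟨by linarith [(hv j).1], (hv j).2⟩⟩
  have step : ∀ {i j}, i ≠ j → i ∈ fractionalCoords t v → j ∈ fractionalCoords t v →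
      ∃ e > (0 : ℝ),
        v + e • (Pi.single i 1 - Pi.single j 1 : ι → ℝ) ∈ convexHull ℝ (sparseBox s t) := by
    intro i j hij hi hj
    obtain ⟨e, he, hw, hcard⟩ := exists_pos_card_fractionalCoords_add_smul_lt hv hij hi hj
    exact ⟨e, he, ih _ hcard hw (by rwa [sum_add_smul_single_sub_single]) rfl⟩
  obtain ⟨i, hi, j, hj, hij⟩ := one_lt_card.1 (not_le.1 hF)
  obtain ⟨a, ha, ha'⟩ := step hij hi hj
  obtain ⟨b, hb, hb'⟩ := step hij.symm hj hi
  rw [← neg_sub, smul_neg, ← sub_eq_add_neg] at hb'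
  exact (convex_convexHull ℝ _).mem_of_add_smul_mem_of_sub_smul_mem ha hb ha' hb'

theorem mul_mem_sparseBox {s : ℕ} {t : ℝ} {c w : ι → ℝ} (hc : ∀ j, |c j| ≤ 1)
    (hw : w ∈ sparseBox s t) : c * w ∈ sparseBox s t :=
  ⟨(card_le_card (monotone_filter_right _ fun _ _ => right_ne_zero_of_mul)).trans hw.1,
    fun j => by
      rw [Pi.mul_apply, abs_mul]
      exact (mul_le_of_le_one_left (abs_nonneg _) (hc j)).trans (hw.2 j)⟩

theorem mul_mem_convexHull_sparseBox {s : ℕ} {t : ℝ} {c w : ι → ℝ} (hc : ∀ j, |c j| ≤ 1)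
    (hw : w ∈ convexHull ℝ (sparseBox s t)) : c * w ∈ convexHull ℝ (sparseBox s t) := by
  have := Set.mem_image_of_mem (LinearMap.mulLeft ℝ c) hw
  rw [LinearMap.image_convexHull] at this
  refine convexHull_mono ?_ this
  rintro _ ⟨w, hw, rfl⟩
  exact mul_mem_sparseBox hc hw

theorem mem_convexHull_sparseBox {s : ℕ} {t : ℝ} (ht : 0 < t) {v : ι → ℝ}
    (hvt : ∀ j, |v j| ≤ t) (hsum : ∑ j, |v j| ≤ s * t) :
    v ∈ convexHull ℝ (sparseBox s t) := by
  have habs := mem_convexHull_sparseBox_of_mem_Icc ht (v := fun j => |v j|)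
    (fun j => ⟨abs_nonneg _, hvt j⟩) hsum
  convert mul_mem_convexHull_sparseBox (c := fun j => (SignType.sign (v j) : ℝ))
    (fun j => ?_) habs
  · ext j
    exact (sign_mul_abs (v j)).symm
  · cases SignType.sign (v j) <;> simp

theorem card_filter_lt_abs_le {s : ℕ} {t : ℝ} (ht : 0 < t) {z : ι → ℝ}
    (hsum : ∑ j, |z j| ≤ s * t) : #(univ.filter fun j => t < |z j|) ≤ s := by
  have : (#(univ.filter fun j => t < |z j|) : ℝ) * t ≤ s * t :=
    calc _ = #(univ.filter fun j => t < |z j|) • t := (nsmul_eq_mul _ _).symm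
      _ ≤ ∑ j ∈ univ.filter fun j => t < |z j|, |z j| :=
          card_nsmul_le_sum _ _ _ fun _ hj => (mem_filter.1 hj).2.le
      _ ≤ ∑ j, |z j| := sum_le_sum_of_subset_of_nonneg (subset_univ _) fun _ _ _ => abs_nonneg _
      _ ≤ s * t := hsum
  exact_mod_cast le_of_mul_le_mul_right this ht

theorem indicator_abs_le_mem_convexHull_sparseBox {s : ℕ} {t : ℝ} (ht : 0 < t) {z : ι → ℝ}
    (hl1 : ∑ j, |z j| ≤ s * t) :
    {j | t < |z j|}ᶜ.indicator z ∈ convexHull ℝ (sparseBox s t) := by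
  refine mem_convexHull_sparseBox ht (fun j => ?_)
    ((sum_le_sum fun j _ => abs_indicator_le_abs_self _ z j).trans hl1)
  by_cases hj : t < |z j|
  · simp [hj, ht.le]
  · simpa [hj] using not_lt.1 hj

end SparseBox

theorem l0Norm_eq_card {d : ℕ} (w : Fin d → ℝ) :
    l0Norm w = #(univ.filter fun j => w j ≠ 0) := by
  rw [l0Norm, ← Set.ncard_coe_finset, coe_filter_univ]

theorem l2Norm_le_of_abs_le {d : ℕ} {w z : Fin d → ℝ} (h : ∀ j, |w j| ≤ |z j|) :
    l2Norm w ≤ l2Norm z :=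
  Real.sqrt_le_sqrt (sum_le_sum fun j _ => sq_le_sq.2 (h j))

theorem sparseBox_subset_sparseBall {d s : ℕ} {t : ℝ} (hst : s * t ^ 2 ≤ 1) :
    sparseBox s t ⊆ sparseBall d s := by
  rintro w ⟨hcard, hwt⟩
  refine ⟨(l0Norm_eq_card w).trans_le hcard, Real.sqrt_le_one.2 ?_⟩
  calc ∑ j, w j ^ 2 = ∑ j ∈ univ.filter fun j => w j ≠ 0, w j ^ 2 :=
        (sum_filter_of_ne fun _ _ h => by simpa using h).symm
    _ ≤ #(univ.filter fun j => w j ≠ 0) • t ^ 2 :=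
        sum_le_card_nsmul _ _ _ fun j _ => by
          simpa only [sq_abs] using pow_le_pow_left₀ (abs_nonneg (w j)) (hwt j) 2
    _ ≤ s * t ^ 2 := by
        rw [nsmul_eq_mul]
        gcongr
    _ ≤ 1 := hst

theorem indicator_lt_abs_mem_sparseBall {d s : ℕ} {t : ℝ} (ht : 0 < t) {z : Fin d → ℝ}
    (hl1 : ∑ j, |z j| ≤ s * t) (hl2 : l2Norm z ≤ 1) :
    {j | t < |z j|}.indicator z ∈ sparseBall d s := by
  refine ⟨?_, (l2Norm_le_of_abs_le fun j => abs_indicator_le_abs_self _ z j).trans hl2⟩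
  rw [l0Norm_eq_card]
  exact (card_le_card (monotone_filter_right _ fun _ _ => Set.mem_of_indicator_ne_zero)).trans
    (card_filter_lt_abs_le ht hl1)

theorem relaxedBall_subset_two_smul_convexHull_sparseBall_general (d s : ℕ)
    (hs : 1 ≤ s) :
    {z : Fin d → ℝ | l1Norm z ≤ Real.sqrt (s : ℝ) ∧ l2Norm z ≤ 1} ⊆
      (2 : ℝ) • convexHull ℝ (sparseBall d s) := by
  rintro z ⟨hz1, hz2⟩
  have hs' : (0 : ℝ) < s := by exact_mod_cast hs
  set t := (√(s : ℝ))⁻¹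
  have ht : 0 < t := by positivity
  have hst : (s : ℝ) * t ^ 2 = 1 := by rw [inv_pow, Real.sq_sqrt hs'.le, mul_inv_cancel₀ hs'.ne']
  have hl1 : ∑ j, |z j| ≤ s * t := by rwa [← div_eq_mul_inv, Real.div_sqrt]
  have hbig := indicator_lt_abs_mem_sparseBall ht hl1 hz2
  have hsmall := convexHull_mono (sparseBox_subset_sparseBall (d := d) hst.le)
    (indicator_abs_le_mem_convexHull_sparseBox ht hl1)
  rw [show (2 : ℝ) = 1 + 1 by norm_num, (convex_convexHull ℝ _).add_smul zero_le_one zero_le_one,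
    one_smul]
  simpa only [Set.indicator_self_add_compl] using
    Set.add_mem_add (subset_convexHull ℝ _ hbig) hsmall

/-- For `d ≥ 1` and `s ≥ 1`,
`{z : ‖z‖₁ ≤ √s, ‖z‖₂ ≤ 1} ⊆ 2 · conv(S_{d,s})`,
where `2 · conv(S_{d,s}) = {2w : w ∈ conv(S_{d,s})}`. -/
theorem relaxedBall_subset_two_smul_convexHull_sparseBall (d s : ℕ)
    (hd : 1 ≤ d) (hs : 1 ≤ s) :
    {z : Fin d → ℝ | l1Norm z ≤ Real.sqrt (s : ℝ) ∧ l2Norm z ≤ 1} ⊆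
      (2 : ℝ) • convexHull ℝ (sparseBall d s) :=
  relaxedBall_subset_two_smul_convexHull_sparseBall_general d s hs
end

section
/- For every dimension d ≥ 1, every natural number s ≥ 1, and every vector v ∈ ℝ^d, the supremum of the linear functional z ↦ ⟨v, z⟩ over the relaxed constraint set is at most twice its supremum over the s-sparse unit-ball vectors: sup{⟨v, z⟩ : z ∈ ℝ^d, ‖z‖₁ ≤ √s, ‖z‖₂ ≤ 1} ≤ 2 · sup{⟨v, z⟩ : z ∈ ℝ^d, ‖z‖₀ ≤ s, ‖z‖₂ ≤ 1}. -/
/-- The Euclidean scalar product `⟨v, z⟩ = ∑ⱼ vⱼ zⱼ` on `ℝ^d`. -/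
noncomputable def euclInner {d : ℕ} (v z : Fin d → ℝ) : ℝ := ∑ j, v j * z j

/-- For every `d ≥ 1`, `s ≥ 1`, and `v ∈ ℝ^d`:
`sup{⟨v,z⟩ : ‖z‖₁ ≤ √s, ‖z‖₂ ≤ 1} ≤ 2 · sup{⟨v,z⟩ : ‖z‖₀ ≤ s, ‖z‖₂ ≤ 1}`. -/
theorem sSup_relaxed_le_two_mul_sSup_sparse (d s : ℕ) (hd : 1 ≤ d) (hs : 1 ≤ s)
    (v : Fin d → ℝ) :
    sSup (euclInner v '' {z : Fin d → ℝ | l1Norm z ≤ Real.sqrt (s : ℝ) ∧ l2Norm z ≤ 1}) ≤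
      2 * sSup (euclInner v '' {z : Fin d → ℝ | l0Norm z ≤ s ∧ l2Norm z ≤ 1}) := by
  classical
  set M := sSup (euclInner v '' {z : Fin d → ℝ | l0Norm z ≤ s ∧ l2Norm z ≤ 1}) with hMdef
  have hs0 : (0:ℝ) < (s:ℝ) := by exact_mod_cast hs
  have hsq : (0:ℝ) < Real.sqrt s := Real.sqrt_pos.2 hs0
  -- boundedness of the sparse image
  have hbdd : BddAbove (euclInner v '' {z : Fin d → ℝ | l0Norm z ≤ s ∧ l2Norm z ≤ 1}) := by
    refine ⟨Real.sqrt (∑ j, v j ^ 2), ?_⟩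
    rintro x ⟨z, ⟨_, hz2⟩, rfl⟩
    calc euclInner v z ≤ Real.sqrt (∑ j, v j ^ 2) * Real.sqrt (∑ j, z j ^ 2) :=
          Real.sum_mul_le_sqrt_mul_sqrt _ _ _
      _ ≤ Real.sqrt (∑ j, v j ^ 2) * 1 := by
          exact mul_le_mul_of_nonneg_left hz2 (Real.sqrt_nonneg _)
      _ = Real.sqrt (∑ j, v j ^ 2) := mul_one _
  have hle : ∀ z : Fin d → ℝ, l0Norm z ≤ s → l2Norm z ≤ 1 → euclInner v z ≤ M :=
    fun z h1 h2 => le_csSup hbdd ⟨z, ⟨h1, h2⟩, rfl⟩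
  have hM0 : 0 ≤ M := by
    have h := hle 0 (by simp [l0Norm]) (by simp [l2Norm])
    simpa [euclInner] using h
  -- choose the set S of the min s d largest coordinates of |v|
  set m := min s d with hmdef
  have hmd : m ≤ d := min_le_right _ _
  have hms : m ≤ s := min_le_left _ _
  obtain ⟨S₀, hS₀sub, hS₀card⟩ := Finset.exists_subset_card_eq (s := (Finset.univ : Finset (Fin d))) (n := m)
    (by simpa using hmd)
  have hne : (Finset.univ.powersetCard m : Finset (Finset (Fin d))).Nonempty :=
    ⟨S₀, Finset.mem_powersetCard.2 ⟨hS₀sub, hS₀card⟩⟩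
  obtain ⟨S, hSmem, hSmax⟩ := Finset.exists_max_image (Finset.univ.powersetCard m)
    (fun T => ∑ j ∈ T, |v j|) hne
  obtain ⟨-, hScard⟩ := Finset.mem_powersetCard.1 hSmem
  -- exchange argument
  have hexch : ∀ j ∉ S, ∀ i ∈ S, |v j| ≤ |v i| := by
    intro j hj i hi
    set S' := insert j (S.erase i) with hS'
    have hjnot : j ∉ S.erase i := fun h => hj (Finset.mem_of_mem_erase h)
    have hS'card : S'.card = m := by
      rw [hS', Finset.card_insert_of_notMem hjnot, Finset.card_erase_of_mem hi, hScard]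
      omega
    have h1 : ∑ x ∈ S', |v x| ≤ ∑ x ∈ S, |v x| :=
      hSmax S' (Finset.mem_powersetCard.2 ⟨Finset.subset_univ _, hS'card⟩)
    have h2 : ∑ x ∈ S', |v x| = |v j| + ∑ x ∈ S.erase i, |v x| :=
      Finset.sum_insert hjnot
    have h3 : ∑ x ∈ S.erase i, |v x| + |v i| = ∑ x ∈ S, |v x| :=
      Finset.sum_erase_add _ _ hi
    linarith
  -- Step B': off-S coordinates are small
  have hB : ∀ j ∉ S, Real.sqrt s * |v j| ≤ M := by
    intro j hj
    have hSne : S ≠ Finset.univ := fun h => hj (h ▸ Finset.mem_univ j)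
    have hSlt : S.card < d := by
      have := Finset.card_lt_card (Finset.ssubset_univ_iff.2 hSne)
      simpa using this
    have hcardS : S.card = s := by omega
    set z : Fin d → ℝ := fun i => if i ∈ S then (if 0 ≤ v i then 1 else -1) / Real.sqrt s else 0
      with hz
    have hz0 : l0Norm z ≤ s := by
      have hsub : {i | z i ≠ 0} ⊆ (S : Set (Fin d)) := by
        intro i hi
        by_contra h
        have h' : i ∉ S := by simpa using h
        exact hi (by simp [hz, h'])
      calc l0Norm z ≤ (S : Set (Fin d)).ncard := Set.ncard_le_ncard hsub (Set.toFinite _)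
        _ = S.card := Set.ncard_coe_finset _
        _ = s := hcardS
    have hzsq : ∀ i, z i ^ 2 = if i ∈ S then 1 / (s:ℝ) else 0 := by
      intro i
      by_cases hiS : i ∈ S
      · simp only [hz, hiS, if_true]
        rcases le_or_gt 0 (v i) with h | h
        · rw [if_pos h]; rw [div_pow, one_pow, Real.sq_sqrt hs0.le]
        · rw [if_neg (not_le.2 h)]; rw [div_pow, Real.sq_sqrt hs0.le]; norm_num
      · simp [hz, hiS]
    have hz2 : l2Norm z ≤ 1 := by
      have : ∑ i, z i ^ 2 = 1 := by
        rw [Finset.sum_congr rfl (fun i _ => hzsq i)]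
        rw [Finset.sum_ite_mem, Finset.univ_inter, Finset.sum_const, hcardS]
        rw [nsmul_eq_mul]; field_simp
      rw [l2Norm, this, Real.sqrt_one]
    have hval : Real.sqrt s * |v j| ≤ euclInner v z := by
      have hterm : ∀ i ∈ S, |v j| / Real.sqrt s ≤ v i * z i := by
        intro i hi
        have : v i * z i = |v i| / Real.sqrt s := by
          simp only [hz, hi, if_true]
          rcases le_or_gt 0 (v i) with h | h
          · rw [if_pos h, abs_of_nonneg h]; ring
          · rw [if_neg (not_le.2 h), abs_of_neg h]; ring
        rw [this]
        exact div_le_div_of_nonneg_right (hexch j hj i hi) hsq.le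
      have hsum : ∑ i ∈ S, (|v j| / Real.sqrt s) ≤ ∑ i ∈ S, v i * z i :=
        Finset.sum_le_sum hterm
      have hfull : euclInner v z = ∑ i ∈ S, v i * z i := by
        rw [euclInner]
        rw [← Finset.sum_subset (Finset.subset_univ S)]
        intro x _ hx
        simp [hz, hx]
      rw [hfull]
      refine le_trans ?_ hsum
      rw [Finset.sum_const, hcardS, nsmul_eq_mul]
      have hss : Real.sqrt s * Real.sqrt s = (s:ℝ) := Real.mul_self_sqrt hs0.le
      have heq : (s:ℝ) * (|v j| / Real.sqrt s) = Real.sqrt s * |v j| := by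
        field_simp
        linear_combination (-(|v j|)) * hss
      exact le_of_eq heq.symm
    exact hval.trans (hle z hz0 hz2)
  -- Step A: the ℓ² mass of v on S is at most M
  have hA : Real.sqrt (∑ i ∈ S, v i ^ 2) ≤ M := by
    by_cases hA0 : ∑ i ∈ S, v i ^ 2 = 0
    · rw [hA0, Real.sqrt_zero]; exact hM0
    · have hpos : 0 < ∑ i ∈ S, v i ^ 2 :=
        lt_of_le_of_ne (Finset.sum_nonneg fun i _ => sq_nonneg _) (Ne.symm hA0)
      set r := Real.sqrt (∑ i ∈ S, v i ^ 2) with hr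
      have hrpos : 0 < r := Real.sqrt_pos.2 hpos
      set z : Fin d → ℝ := fun i => if i ∈ S then v i / r else 0 with hz
      have hz0 : l0Norm z ≤ s := by
        have hsub : {i | z i ≠ 0} ⊆ (S : Set (Fin d)) := by
          intro i hi; by_contra h
          have h' : i ∉ S := by simpa using h
          exact hi (by simp [hz, h'])
        calc l0Norm z ≤ (S : Set (Fin d)).ncard := Set.ncard_le_ncard hsub (Set.toFinite _)
          _ = S.card := Set.ncard_coe_finset _
          _ ≤ s := hScard ▸ hms
      have hz2 : l2Norm z ≤ 1 := by
        have : ∑ i, z i ^ 2 = 1 := by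
          have : ∀ i, z i ^ 2 = if i ∈ S then v i ^ 2 / (∑ i ∈ S, v i ^ 2) else 0 := by
            intro i
            by_cases hiS : i ∈ S
            · simp only [hz, hiS, if_true, div_pow, hr, Real.sq_sqrt hpos.le]
            · simp [hz, hiS]
          rw [Finset.sum_congr rfl (fun i _ => this i)]
          rw [Finset.sum_ite_mem, Finset.univ_inter, ← Finset.sum_div]
          field_simp
        rw [l2Norm, this, Real.sqrt_one]
      have hval : euclInner v z = r := by
        rw [euclInner]
        have hfull : ∑ j, v j * z j = ∑ i ∈ S, v i * z i := by
          rw [← Finset.sum_subset (Finset.subset_univ S)]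
          intro x _ hx; simp [hz, hx]
        rw [hfull]
        have : ∀ i ∈ S, v i * z i = v i ^ 2 / r := by
          intro i hi; simp only [hz, hi, if_true]; ring
        rw [Finset.sum_congr rfl this, ← Finset.sum_div]
        rw [hr, Real.div_sqrt]
      rw [← hval]
      exact hle z hz0 hz2
  -- main bound
  refine Real.sSup_le ?_ (by linarith)
  rintro x ⟨z, ⟨hz1, hz2⟩, rfl⟩
  have hsplit : euclInner v z = ∑ i ∈ S, v i * z i + ∑ i ∈ Sᶜ, v i * z i := by
    rw [euclInner, ← Finset.sum_add_sum_compl S]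
  have hterm1 : ∑ i ∈ S, v i * z i ≤ M := by
    have hcs : ∑ i ∈ S, v i * z i ≤
        Real.sqrt (∑ i ∈ S, v i ^ 2) * Real.sqrt (∑ i ∈ S, z i ^ 2) :=
      Real.sum_mul_le_sqrt_mul_sqrt _ _ _
    have hzS : Real.sqrt (∑ i ∈ S, z i ^ 2) ≤ 1 := by
      refine le_trans (Real.sqrt_le_sqrt ?_) hz2
      exact Finset.sum_le_sum_of_subset_of_nonneg (Finset.subset_univ S)
        (fun i _ _ => sq_nonneg _)
    calc ∑ i ∈ S, v i * z i ≤ _ := hcs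
      _ ≤ Real.sqrt (∑ i ∈ S, v i ^ 2) * 1 :=
          mul_le_mul_of_nonneg_left hzS (Real.sqrt_nonneg _)
      _ = Real.sqrt (∑ i ∈ S, v i ^ 2) := mul_one _
      _ ≤ M := hA
  have hterm2 : ∑ i ∈ Sᶜ, v i * z i ≤ M := by
    have hb : ∀ i ∈ Sᶜ, v i * z i ≤ (M / Real.sqrt s) * |z i| := by
      intro i hi
      have hiS : i ∉ S := Finset.mem_compl.1 hi
      have hvi : |v i| ≤ M / Real.sqrt s := by
        rw [le_div_iff₀ hsq]; rw [mul_comm]; exact hB i hiS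
      calc v i * z i ≤ |v i * z i| := le_abs_self _
        _ = |v i| * |z i| := abs_mul _ _
        _ ≤ (M / Real.sqrt s) * |z i| :=
            mul_le_mul_of_nonneg_right hvi (abs_nonneg _)
    calc ∑ i ∈ Sᶜ, v i * z i ≤ ∑ i ∈ Sᶜ, (M / Real.sqrt s) * |z i| := Finset.sum_le_sum hb
      _ = (M / Real.sqrt s) * ∑ i ∈ Sᶜ, |z i| := by rw [Finset.mul_sum]
      _ ≤ (M / Real.sqrt s) * Real.sqrt s := by
          refine mul_le_mul_of_nonneg_left ?_ (div_nonneg hM0 hsq.le)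
          refine le_trans ?_ hz1
          rw [l1Norm]
          exact Finset.sum_le_sum_of_subset_of_nonneg (Finset.subset_univ Sᶜ)
            (fun i _ _ => abs_nonneg _)
      _ = M := by field_simp
  linarith [hsplit, hterm1, hterm2]
end
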